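/- arXiv:1901.06819 — 2 statements merged into one kernel-verified Lean document; each statement's English description precedes it below -/
import Mathlib

section
/- Let X be a paracompact Lindelöf topological space and let (U_ξ : ξ ∈ [0,α]) be a regular transfinite sequence of functionally open subsets of X. Then the set of ordinals ξ ∈ [0,α) for which the set P_ξ = U_ξ \ ⋃_{η<ξ} U_η is nonempty is at most countable. -/
open Set Topology Metric Filter

universe u

/-- A set is functionally open if it is the preimage of an open set of reals
under a continuous real-valued function. -/
def FunOpen {X : Type*} [TopologicalSpace X] (U : Set X) : Prop :=
  ∃ (g : X → ℝ) (V : Set ℝ), Continuous g ∧ IsOpen V ∧ U = g ⁻¹' V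

/-- A set is functionally closed if its complement is functionally open. -/
def FunClosed {X : Type*} [TopologicalSpace X] (A : Set X) : Prop :=
  FunOpen Aᶜ

/-- A transfinite sequence `(U ξ : ξ ∈ [0, α])` is regular in `X`. -/
def IsRegularSeq {X : Type*} [TopologicalSpace X] (α : Ordinal.{u}) (U : Ordinal → Set X) : Prop :=
  (∀ ξ ≤ α, IsOpen (U ξ)) ∧
  U 0 = ∅ ∧
  U α = Set.univ ∧
  (∀ ξ η : Ordinal, ξ ≤ η → η < α → U ξ ⊆ U η) ∧
  (∀ γ ≤ α, Order.IsSuccLimit γ → U γ = ⋃ ξ < γ, U ξ)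

/-- `f` is functionally `ε`-fragmented: there is a regular sequence of functionally
open sets whose consecutive differences have `f`-image of diameter `< ε`. -/
def FunctionallyEpsFragmented {X Y : Type*} [TopologicalSpace X] [PseudoMetricSpace Y]
    (f : X → Y) (ε : ℝ) : Prop :=
  ∃ (α : Ordinal.{u}) (U : Ordinal → Set X),
    IsRegularSeq α U ∧ (∀ ξ ≤ α, FunOpen (U ξ)) ∧
    ∀ ξ < α, Metric.diam (f '' (U (ξ + 1) \ U ξ)) < ε

/-- An indexed family of sets is discrete: each point has a neighborhood meeting
at most one member of the family. -/
def DiscreteFamily {X ι : Type*} [TopologicalSpace X] (A : ι → Set X) : Prop :=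
  ∀ x : X, ∃ N ∈ 𝓝 x, {i : ι | (N ∩ A i).Nonempty}.Subsingleton

/-- An indexed family is strongly functionally discrete (sfd). -/
def SFDFamily {X ι : Type*} [TopologicalSpace X] (A : ι → Set X) : Prop :=
  ∃ U : ι → Set X, DiscreteFamily U ∧ (∀ i, FunOpen (U i)) ∧ ∀ i, closure (A i) ⊆ U i

/-- A set-indexed family of sets is discrete. -/
def DiscreteSetFamily {X : Type*} [TopologicalSpace X] (𝓐 : Set (Set X)) : Prop :=
  ∀ x : X, ∃ N ∈ 𝓝 x, {A ∈ 𝓐 | (N ∩ A).Nonempty}.Subsingleton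

/-- A family `𝓑` of subsets of `X` is a base for `f : X → Y`. -/
def IsBaseFor {X Y : Type*} [TopologicalSpace Y] (𝓑 : Set (Set X)) (f : X → Y) : Prop :=
  ∀ V : Set Y, IsOpen V → ∃ 𝓑V ⊆ 𝓑, f ⁻¹' V = ⋃₀ 𝓑V

/-!
Count the nonempty layers `U ξ \ ⋃ η < ξ, U η` below `γ` by induction on `γ`; only limits need
an argument. There `U γ = ⋃ ξ < γ, U ξ` is a cozero set, hence Lindelöf, so countably many `U c`
with `c < γ` cover it. A point of a nonempty layer `ξ < γ` lies in one of them, and a layer meets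
`U c` only if `ξ ≤ c`; so the nonempty layers below `γ` lie below countably many `succ c < γ`.
-/

lemma FunOpen.isLindelof {X : Type*} [TopologicalSpace X] [LindelofSpace X] {U : Set X}
    (h : FunOpen U) : IsLindelof U := by
  obtain ⟨g, V, hg, hV, rfl⟩ := h
  obtain ⟨F, hFc, -, hFV, -⟩ := hV.exists_iUnion_isClosed
  rw [← hFV, preimage_iUnion]
  exact isLindelof_iUnion fun n => ((hFc n).preimage hg).isLindelof

section NewPart

variable {X ι : Type*} [LinearOrder ι]

def newPart (U : ι → Set X) (i : ι) : Set X :=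
  U i \ ⋃ j < i, U j

lemma le_of_mem_newPart_of_mem {U : ι → Set X} {i j : ι} {x : X} (hi : x ∈ newPart U i)
    (hj : x ∈ U j) : i ≤ j :=
  not_lt.1 fun hji => hi.2 (mem_biUnion hji hj)

variable [TopologicalSpace X] [SuccOrder ι]

lemma countable_newPart_nonempty_of_isSuccLimit {U : ι → Set X} {γ : ι}
    (hγ : Order.IsSuccLimit γ) (hopen : ∀ ξ < γ, IsOpen (U ξ))
    (hlind : IsLindelof (⋃ ξ < γ, U ξ))
    (hbelow : ∀ β < γ, {ξ | ξ < β ∧ (newPart U ξ).Nonempty}.Countable) :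
    {ξ | ξ < γ ∧ (newPart U ξ).Nonempty}.Countable := by
  obtain ⟨C, hCγ, hCc, hcover⟩ :=
    hlind.elim_countable_subcover_image (b := Iio γ) (fun ξ hξ => hopen ξ hξ) subset_rfl
  have hsub : {ξ | ξ < γ ∧ (newPart U ξ).Nonempty} ⊆
      ⋃ c ∈ C, {ξ | ξ < Order.succ c ∧ (newPart U ξ).Nonempty} := by
    rintro ξ ⟨hξγ, x, hx⟩
    obtain ⟨c, hcC, hxc⟩ := mem_iUnion₂.1 (hcover (mem_biUnion hξγ hx.1))
    have hξc : ξ ≤ c := le_of_mem_newPart_of_mem hx hxc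
    exact mem_biUnion hcC ⟨hξc.trans_lt (Order.lt_succ_of_not_isMax (hCγ hcC).not_isMax), x, hx⟩
  exact (hCc.biUnion fun c hc => hbelow _ (hγ.succ_lt (hCγ hc))).mono hsub

variable [WellFoundedLT ι]

theorem countable_newPart_nonempty {U : ι → Set X} {α : ι} (hopen : ∀ ξ < α, IsOpen (U ξ))
    (hlind : ∀ γ ≤ α, Order.IsSuccLimit γ → IsLindelof (⋃ ξ < γ, U ξ)) :
    {ξ | ξ < α ∧ (newPart U ξ).Nonempty}.Countable := by
  induction α using SuccOrder.limitRecOn with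
  | isMin a ha =>
    exact countable_empty.mono fun ξ hξ => (ha.not_lt hξ.1).elim
  | succ a ha ih =>
    have hlt : a < Order.succ a := Order.lt_succ_of_not_isMax ha
    refine ((ih (fun ξ hξ => hopen ξ (hξ.trans hlt))
      (fun γ hγ => hlind γ (hγ.trans hlt.le))).insert a).mono ?_
    rintro ξ ⟨hξ, hne⟩
    rcases (Order.le_of_lt_succ hξ).lt_or_eq with h | rfl
    · exact Or.inr ⟨h, hne⟩
    · exact Or.inl rfl
  | isSuccLimit a ha ih =>
    refine countable_newPart_nonempty_of_isSuccLimit ha hopen (hlind a le_rfl ha) fun β hβ => ?_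
    exact ih β hβ (fun ξ hξ => hopen ξ (hξ.trans hβ)) (fun γ hγ => hlind γ (hγ.trans hβ.le))

end NewPart

theorem statement5_general {X : Type u} [TopologicalSpace X]
    [LindelofSpace X] (α : Ordinal.{u}) (U : Ordinal.{u} → Set X)
    (hreg : IsRegularSeq α U) (hfo : ∀ ξ ≤ α, FunOpen (U ξ)) :
    {ξ : Ordinal.{u} | ξ < α ∧ (U ξ \ ⋃ η < ξ, U η).Nonempty}.Countable := by
  obtain ⟨hopen, -, -, -, hlimit⟩ := hreg
  refine countable_newPart_nonempty (fun ξ hξ => hopen ξ hξ.le) fun γ hγ hlim => ?_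
  rw [← hlimit γ hγ hlim]
  exact (hfo γ hγ).isLindelof

/-- In a paracompact Lindelöf space, a regular sequence of functionally open sets
has only countably many nonempty consecutive differences. -/
theorem statement5 {X : Type u} [TopologicalSpace X] [ParacompactSpace X]
    [LindelofSpace X] (α : Ordinal.{u}) (U : Ordinal.{u} → Set X)
    (hreg : IsRegularSeq α U) (hfo : ∀ ξ ≤ α, FunOpen (U ξ)) :
    {ξ : Ordinal.{u} | ξ < α ∧ (U ξ \ ⋃ η < ξ, U η).Nonempty}.Countable :=
  statement5_general α U hreg hfo
end

section
/- Let X be a collectionwise normal topological space (in particular, a paracompact Hausdorff space). Then every discrete family (A_i : i ∈ I) of subsets of X is strongly functionally discrete: there exists a discrete family (U_i : i ∈ I) of functionally open subsets of X such that the closure of A_i is contained in U_i for every i ∈ I. -/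
open Set Topology Metric Filter

universe u

/-- A T1 space is collectionwise normal if every discrete family of closed sets
can be separated by a pairwise disjoint family of open sets. -/
def CollectionwiseNormal (X : Type*) [TopologicalSpace X] : Prop :=
  ∀ 𝓕 : Set (Set X), (∀ F ∈ 𝓕, IsClosed F) → DiscreteSetFamily 𝓕 →
    ∃ V : Set X → Set X, (∀ F ∈ 𝓕, IsOpen (V F)) ∧ (∀ F ∈ 𝓕, F ⊆ V F) ∧
      ∀ F ∈ 𝓕, ∀ G ∈ 𝓕, F ≠ G → Disjoint (V F) (V G)

/-! Separate the closures `Cᵢ` of the `Aᵢ` by pairwise disjoint open sets `Wᵢ`. Since the `Cᵢ`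
form a locally finite family, their union is closed, and by Urysohn there is a continuous
`f : X → ℝ` equal to `1` on `⋃ Cᵢ` and to `0` off `⋃ Wᵢ`. Cutting `f` down to `Wᵢ` keeps it
continuous, because `f` vanishes on the frontier of `Wᵢ`; the sets `Uᵢ = Wᵢ ∩ {f > 1/2}` are
then functionally open, and they form a discrete family since `{f ≥ 1/2}` is a closed set
covered by the disjoint open sets `Wᵢ`. -/

section

open Function

variable {X ι : Type*} [TopologicalSpace X]

theorem DiscreteFamily.closure {A : ι → Set X} (hA : DiscreteFamily A) :
    DiscreteFamily fun i => closure (A i) := by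
  intro x
  obtain ⟨N, hN, hsub⟩ := hA x
  obtain ⟨O, hON, hO, hxO⟩ := mem_nhds_iff.mp hN
  have hmeet : ∀ i, (O ∩ _root_.closure (A i)).Nonempty → (N ∩ A i).Nonempty := by
    rintro i ⟨y, hyO, hyC⟩
    obtain ⟨z, hzO, hzA⟩ := mem_closure_iff.mp hyC O hO hyO
    exact ⟨z, hON hzO, hzA⟩
  exact ⟨O, hO.mem_nhds hxO, fun i hi j hj => hsub (hmeet i hi) (hmeet j hj)⟩

theorem DiscreteFamily.locallyFinite {A : ι → Set X} (hA : DiscreteFamily A) :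
    LocallyFinite A := by
  intro x
  obtain ⟨N, hN, hsub⟩ := hA x
  exact ⟨N, hN, hsub.finite.subset fun i hi => by simpa only [inter_comm] using hi⟩

theorem DiscreteFamily.injOn_nonempty {A : ι → Set X} (hA : DiscreteFamily A) :
    InjOn A {i | (A i).Nonempty} := by
  rintro i ⟨x, hx⟩ j - hij
  obtain ⟨N, hN, hsub⟩ := hA x
  exact hsub ⟨x, mem_of_mem_nhds hN, hx⟩ ⟨x, mem_of_mem_nhds hN, hij ▸ hx⟩

theorem discreteFamily_cond {s t : Set X} (hs : IsClosed s) (ht : IsClosed t)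
    (hst : Disjoint s t) : DiscreteFamily fun b : Bool => cond b s t := by
  intro x
  by_cases hxt : x ∈ t
  · refine ⟨sᶜ, hs.isOpen_compl.mem_nhds fun hxs => hst.ne_of_mem hxs hxt rfl,
      (subsingleton_singleton (a := false)).anti ?_⟩
    rintro (_ | _) ⟨y, hy, hy'⟩
    exacts [rfl, absurd hy' hy]
  · refine ⟨tᶜ, ht.isOpen_compl.mem_nhds hxt, (subsingleton_singleton (a := true)).anti ?_⟩
    rintro (_ | _) ⟨y, hy, hy'⟩
    exacts [absurd hy' hy, rfl]

theorem CollectionwiseNormal.exists_open_pairwiseDisjoint (hCN : CollectionwiseNormal X)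
    {F : ι → Set X} (hF : ∀ i, IsClosed (F i)) (hFd : DiscreteFamily F) :
    ∃ W : ι → Set X, (∀ i, IsOpen (W i)) ∧ (∀ i, F i ⊆ W i) ∧ Pairwise (Disjoint on W) := by
  classical
  obtain ⟨V, hVopen, hFV, hVdisj⟩ := hCN (F '' {i | (F i).Nonempty})
    (by rintro _ ⟨i, -, rfl⟩; exact hF i)
    (by
      intro x
      obtain ⟨N, hN, hsub⟩ := hFd x
      refine ⟨N, hN, ?_⟩
      rintro _ ⟨⟨i, -, rfl⟩, hi⟩ _ ⟨⟨j, -, rfl⟩, hj⟩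
      rw [hsub hi hj])
  -- Indices of empty members go to `∅`, as they may share the single member `∅` of the family.
  refine ⟨fun i => if (F i).Nonempty then V (F i) else ∅, fun i => ?_, fun i => ?_,
    fun i j hij => ?_⟩
  · dsimp only
    split_ifs with h
    exacts [hVopen _ ⟨i, h, rfl⟩, isOpen_empty]
  · dsimp only
    split_ifs with h
    exacts [hFV _ ⟨i, h, rfl⟩, (not_nonempty_iff_eq_empty.mp h).subset]
  · dsimp only [Function.onFun]
    split_ifs with hi hj
    · exact hVdisj _ ⟨i, hi, rfl⟩ _ ⟨j, hj, rfl⟩ fun h => hij (hFd.injOn_nonempty hi hj h)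
    all_goals simp

theorem CollectionwiseNormal.normalSpace (hCN : CollectionwiseNormal X) : NormalSpace X := by
  refine ⟨fun s t hs ht hst => ?_⟩
  obtain ⟨W, hW, hFW, hWd⟩ := hCN.exists_open_pairwiseDisjoint (F := fun b : Bool => cond b s t)
    (Bool.forall_bool.mpr ⟨ht, hs⟩) (discreteFamily_cond hs ht hst)
  exact ⟨W true, W false, hW _, hW _, hFW true, hFW false, hWd (by decide)⟩

theorem frontier_subset_compl_iUnion_of_pairwiseDisjoint {W : ι → Set X}
    (hW : ∀ i, IsOpen (W i)) (hWd : Pairwise (Disjoint on W)) (i : ι) :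
    frontier (W i) ⊆ (⋃ j, W j)ᶜ := by
  rintro x hx hxW
  obtain ⟨j, hj⟩ := mem_iUnion.mp hxW
  rw [(hW i).frontier_eq] at hx
  obtain ⟨y, hyj, hyi⟩ := mem_closure_iff.mp hx.1 _ (hW j) hj
  obtain rfl : i = j := by_contra fun hij => (hWd hij).ne_of_mem hyi hyj rfl
  exact hx.2 hj

theorem discreteFamily_of_subset_inter_of_pairwiseDisjoint {U W : ι → Set X} {K : Set X}
    (hW : ∀ i, IsOpen (W i)) (hWd : Pairwise (Disjoint on W)) (hK : IsClosed K)
    (hKW : K ⊆ ⋃ i, W i) (hUW : ∀ i, U i ⊆ W i ∩ K) : DiscreteFamily U := by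
  intro x
  by_cases hx : x ∈ K
  · obtain ⟨j, hj⟩ := mem_iUnion.mp (hKW hx)
    refine ⟨W j, (hW j).mem_nhds hj, (subsingleton_singleton (a := j)).anti ?_⟩
    rintro i ⟨y, hyj, hyi⟩
    by_contra! hij
    exact (hWd hij).ne_of_mem (hUW i hyi).1 hyj rfl
  · refine ⟨Kᶜ, hK.isOpen_compl.mem_nhds hx, ?_⟩
    rintro i ⟨y, hyK, hyU⟩
    exact absurd (hUW i hyU).2 hyK

theorem sfdFamily_of_pairwiseDisjoint [NormalSpace X] {A W : ι → Set X}
    (hA : LocallyFinite A) (hW : ∀ i, IsOpen (W i)) (hWd : Pairwise (Disjoint on W))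
    (hAW : ∀ i, closure (A i) ⊆ W i) : SFDFamily A := by
  have hG : IsOpen (⋃ i, W i) := isOpen_iUnion hW
  obtain ⟨f, hf0, hf1, -⟩ := exists_continuous_zero_one_of_isClosed hG.isClosed_compl
    (hA.closure.isClosed_iUnion fun i => isClosed_closure)
    (disjoint_compl_left_iff_subset.mpr (iUnion_mono hAW))
  have hK : IsClosed (f ⁻¹' Ici (1 / 2)) := isClosed_Ici.preimage f.continuous
  have hKW : f ⁻¹' Ici (1 / 2) ⊆ ⋃ i, W i := fun x hx =>
    by_contra fun hxG => by norm_num [mem_preimage, hf0 hxG] at hx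
  refine ⟨fun i => (W i).indicator f ⁻¹' Ioi (1 / 2),
    discreteFamily_of_subset_inter_of_pairwiseDisjoint hW hWd hK hKW fun i x hx => ?_,
    fun i => ⟨_, _, ?_, isOpen_Ioi, rfl⟩, fun i x hx => ?_⟩
  · have hxW : x ∈ W i := by
      by_contra h
      norm_num [mem_preimage, indicator_of_notMem h] at hx
    rw [mem_preimage, indicator_of_mem hxW] at hx
    exact ⟨hxW, show (1 / 2 : ℝ) ≤ f x from hx.le⟩
  · exact continuous_indicator
      (fun x hx => hf0 (frontier_subset_compl_iUnion_of_pairwiseDisjoint hW hWd i hx))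
      f.continuous.continuousOn
  · have hfx : f x = 1 := hf1 (mem_iUnion_of_mem i hx)
    norm_num [mem_preimage, indicator_of_mem (hAW i hx), hfx]

end

theorem statement10_general {X : Type*} [TopologicalSpace X]
    (hCN : CollectionwiseNormal X) {ι : Type*} (A : ι → Set X)
    (hA : DiscreteFamily A) :
    SFDFamily A := by
  obtain ⟨W, hW, hCW, hWd⟩ :=
    hCN.exists_open_pairwiseDisjoint (fun i => isClosed_closure) hA.closure
  have := hCN.normalSpace
  exact sfdFamily_of_pairwiseDisjoint hA.locallyFinite hW hWd hCW

/-- In a collectionwise normal (T1) space, every discrete family of sets is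
strongly functionally discrete. -/
theorem statement10 {X : Type*} [TopologicalSpace X] [T1Space X]
    (hCN : CollectionwiseNormal X) {ι : Type*} (A : ι → Set X)
    (hA : DiscreteFamily A) :
    SFDFamily A :=
  statement10_general hCN A hA
end
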